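/- arXiv:2111.02343 — 4 statements merged into one kernel-verified Lean document; each statement's English description precedes it below -/
import Mathlib

section
/- For $N > 0$ and $S_0 \in (0, N]$, let $S_\infty(\mathcal{R}_0)$ denote the unique solution in $(0, S_0)$ of $\log(S_0/S_\infty) = \mathcal{R}_0 (S_0 - S_\infty)/N$ for $\mathcal{R}_0 > 1$ (with $S_0 = N$). Then $\mathcal{R}_0 \mapsto S_\infty(\mathcal{R}_0)$ is strictly decreasing on $(1, \infty)$; equivalently, the final epidemic size $S_0 - S_\infty(\mathcal{R}_0)$ is strictly increasing in $\mathcal{R}_0$. -/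
theorem final_size_strictly_decreasing_in_R0
    (N S0 : ℝ) (hN : 0 < N) (hS0 : S0 = N)
    (r1 r2 x1 x2 : ℝ) (hr1 : 1 < r1) (hr12 : r1 < r2)
    (hx1 : x1 ∈ Set.Ioo 0 S0) (hx2 : x2 ∈ Set.Ioo 0 S0)
    (heq1 : Real.log (S0 / x1) = r1 * (S0 - x1) / N)
    (heq2 : Real.log (S0 / x2) = r2 * (S0 - x2) / N) :
    x2 < x1 ∧ S0 - x1 < S0 - x2 := by
  subst hS0
  set N := S0 with hNdef
  obtain ⟨hx1p, hx1N⟩ := hx1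
  obtain ⟨hx2p, hx2N⟩ := hx2
  have hlog1 : Real.log (N / x1) = Real.log N - Real.log x1 :=
    Real.log_div (ne_of_gt hN) (ne_of_gt hx1p)
  have hlog2 : Real.log (N / x2) = Real.log N - Real.log x2 :=
    Real.log_div (ne_of_gt hN) (ne_of_gt hx2p)
  -- slope of log secant through N equals r_i / N
  have h1 : Real.log (N / x1) * N = r1 * (N - x1) := by
    rw [heq1]; field_simp
  have h2 : Real.log (N / x2) * N = r2 * (N - x2) := by
    rw [heq2]; field_simp
  have hs1 : (Real.log x1 - Real.log N) / (x1 - N) = r1 / N := by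
    rw [div_eq_div_iff (by linarith) (by linarith)]
    nlinarith [h1, hlog1]
  have hs2 : (Real.log x2 - Real.log N) / (x2 - N) = r2 / N := by
    rw [div_eq_div_iff (by linarith) (by linarith)]
    nlinarith [h2, hlog2]
  have key : x2 < x1 := by
    by_contra h
    push_neg at h
    rcases eq_or_lt_of_le h with heq | hlt
    · subst heq
      have : r1 / N = r2 / N := by rw [← hs1, ← hs2]
      have : r1 = r2 := by
        field_simp at this; exact this
      linarith
    · have conc := strictConcaveOn_log_Ioi
      have := conc.secant_strict_mono (a := N) (x := x1) (y := x2)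
        (Set.mem_Ioi.mpr hN) (Set.mem_Ioi.mpr hx1p) (Set.mem_Ioi.mpr hx2p)
        (by linarith) (by linarith) hlt
      rw [hs1, hs2] at this
      have : r2 < r1 := by
        have hN' : (0:ℝ) < N := hN
        exact (div_lt_div_iff_of_pos_right hN').mp this
      linarith
  exact ⟨key, by linarith⟩
end

section
/- Suppose $\log\frac{S_0}{S_\infty} = \frac{a(N_\star)}{N_\star}(S_0 - S_\infty)\int_0^\infty (f A_i(\tau) + (1-f)A_a(\tau))d\tau$ for some $N_\star$ with $\frac{a(N_0)}{N_0} \leq \frac{a(N_\star)}{N_\star} \leq \frac{a(N_0)}{(1-\mu)N_0}$, where $\mu \in [0,1)$, $S_0 > S_\infty > 0$, $f \in (0,1)$, and $A_i, A_a \geq 0$ are integrable. Let $\mathcal{R}_0 = a(N_0)\int_0^\infty(f A_i + (1-f)A_a)$. Then $\mathcal{R}_0 \frac{S_0 - S_\infty}{N_0} \leq \log\frac{S_0}{S_\infty} \leq \frac{1}{1-\mu}\mathcal{R}_0 \frac{S_0 - S_\infty}{N_0}$. -/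
open MeasureTheory

theorem final_size_two_sided_estimate_with_deaths
    (a : ℝ → ℝ) (N0 Nstar μ S0 Sinf f : ℝ) (Ai Aa : ℝ → ℝ)
    (hN0 : 0 < N0) (hNstar : 0 < Nstar)
    (hμ : μ ∈ Set.Ico (0:ℝ) 1)
    (hS : 0 < Sinf) (hSS : Sinf < S0)
    (hf : f ∈ Set.Ioo (0:ℝ) 1)
    (hAi_nonneg : ∀ τ, 0 ≤ τ → 0 ≤ Ai τ) (hAa_nonneg : ∀ τ, 0 ≤ τ → 0 ≤ Aa τ)
    (hAi_int : IntegrableOn Ai (Set.Ioi 0)) (hAa_int : IntegrableOn Aa (Set.Ioi 0))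
    (hlow : a N0 / N0 ≤ a Nstar / Nstar)
    (hhigh : a Nstar / Nstar ≤ a N0 / ((1 - μ) * N0))
    (heq : Real.log (S0 / Sinf)
      = a Nstar / Nstar * (S0 - Sinf)
          * ∫ τ in Set.Ioi (0:ℝ), (f * Ai τ + (1 - f) * Aa τ))
    (R0 : ℝ)
    (hR0 : R0 = a N0 * ∫ τ in Set.Ioi (0:ℝ), (f * Ai τ + (1 - f) * Aa τ)) :
    R0 * (S0 - Sinf) / N0 ≤ Real.log (S0 / Sinf) ∧
      Real.log (S0 / Sinf) ≤ 1 / (1 - μ) * R0 * (S0 - Sinf) / N0 := by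
  set I := ∫ τ in Set.Ioi (0:ℝ), (f * Ai τ + (1 - f) * Aa τ) with hI
  have hInn : 0 ≤ I := by
    apply setIntegral_nonneg measurableSet_Ioi
    intro τ hτ
    have hτ' : (0:ℝ) ≤ τ := le_of_lt hτ
    have := hAi_nonneg τ hτ'
    have := hAa_nonneg τ hτ'
    nlinarith [hf.1, hf.2]
  have hK : 0 ≤ (S0 - Sinf) * I := mul_nonneg (by linarith) hInn
  have hμ1 : (0:ℝ) < 1 - μ := by have := hμ.2; linarith
  have hN0' : N0 ≠ 0 := ne_of_gt hN0
  have hμ1' : (1:ℝ) - μ ≠ 0 := ne_of_gt hμ1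
  constructor
  · have h1 : a N0 / N0 * ((S0 - Sinf) * I) ≤ a Nstar / Nstar * ((S0 - Sinf) * I) :=
      mul_le_mul_of_nonneg_right hlow hK
    have h2 : R0 * (S0 - Sinf) / N0 = a N0 / N0 * ((S0 - Sinf) * I) := by
      rw [hR0]; field_simp
    rw [h2, heq]; linarith [h1]
  · have h1 : a Nstar / Nstar * ((S0 - Sinf) * I) ≤ a N0 / ((1 - μ) * N0) * ((S0 - Sinf) * I) :=
      mul_le_mul_of_nonneg_right hhigh hK
    have h2 : 1 / (1 - μ) * R0 * (S0 - Sinf) / N0 = a N0 / ((1 - μ) * N0) * ((S0 - Sinf) * I) := by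
      rw [hR0]; field_simp
    rw [h2, heq]; linarith [h1]
end

section
/- Let $N > 0$, $S_0 = N$, and for $r > 1$ let $S_\infty(r)$ denote the unique solution in $(0, S_0)$ of $\log(S_0/x) = r(S_0 - x)/N$. Fix $\mathcal{R}_0 > 1$ and $\mu \in [0,1)$ with $\frac{\mathcal{R}_0}{1-\mu} > 1$. If $S_\infty^* \in (0, S_0)$ satisfies $\mathcal{R}_0 \frac{S_0 - S_\infty^*}{N} \leq \log\frac{S_0}{S_\infty^*} \leq \frac{\mathcal{R}_0}{1-\mu}\frac{S_0 - S_\infty^*}{N}$, then $S_\infty(\mathcal{R}_0/(1-\mu)) \leq S_\infty^* \leq S_\infty(\mathcal{R}_0)$. -/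
-- On (0, N/r], g is strictly decreasing: log b - log a > r(b-a)/N when b*r ≤ N
lemma logA_aux (N r a b : ℝ) (hN : 0 < N) (ha : 0 < a) (hab : a < b) (hb : b * r ≤ N) :
    r * (b - a) / N < Real.log b - Real.log a := by
  have hb0 : 0 < b := lt_trans ha hab
  have h1 : Real.log (a / b) < a / b - 1 :=
    Real.log_lt_sub_one_of_pos (div_pos ha hb0) (by
      intro h
      have : a = b := by field_simp at h; linarith
      linarith)
  rw [Real.log_div (ne_of_gt ha) (ne_of_gt hb0)] at h1
  have h2 : a / b - 1 = -((b - a) / b) := by field_simp; ring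
  have h3 : (b - a) / b < Real.log b - Real.log a := by
    rw [h2] at h1; linarith
  have h4 : r * (b - a) / N ≤ (b - a) / b := by
    rw [div_le_div_iff₀ hN hb0]
    nlinarith
  linarith

-- On [N/r, ∞), g is strictly increasing: log b - log a < r(b-a)/N when N ≤ a*r
lemma logB_aux (N r a b : ℝ) (hN : 0 < N) (ha : 0 < a) (hab : a < b) (hra : N ≤ a * r) :
    Real.log b - Real.log a < r * (b - a) / N := by
  have hb0 : 0 < b := lt_trans ha hab
  have h1 : Real.log (b / a) < b / a - 1 :=
    Real.log_lt_sub_one_of_pos (div_pos hb0 ha) (by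
      intro h
      have : b = a := by field_simp at h; linarith
      linarith)
  rw [Real.log_div (ne_of_gt hb0) (ne_of_gt ha)] at h1
  have h2 : b / a - 1 = (b - a) / a := by field_simp
  have h4 : (b - a) / a ≤ r * (b - a) / N := by
    rw [div_le_div_iff₀ ha hN]
    nlinarith
  linarith

theorem final_size_sandwich_with_deaths
    (N S0 R0 μ : ℝ) (hN : 0 < N) (hS0 : S0 = N)
    (hR0 : 1 < R0) (hμ : μ ∈ Set.Ico (0:ℝ) 1)
    (hR0μ : 1 < R0 / (1 - μ))
    (x1 x2 Sinfstar : ℝ)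
    (hx1 : x1 ∈ Set.Ioo 0 S0)
    (hx1eq : Real.log (S0 / x1) = R0 / (1 - μ) * (S0 - x1) / N)
    (hx2 : x2 ∈ Set.Ioo 0 S0)
    (hx2eq : Real.log (S0 / x2) = R0 * (S0 - x2) / N)
    (hstar : Sinfstar ∈ Set.Ioo 0 S0)
    (hlow : R0 * (S0 - Sinfstar) / N ≤ Real.log (S0 / Sinfstar))
    (hhigh : Real.log (S0 / Sinfstar) ≤ R0 / (1 - μ) * (S0 - Sinfstar) / N) :
    x1 ≤ Sinfstar ∧ Sinfstar ≤ x2 := by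
  rw [hS0] at hx1 hx1eq hx2 hx2eq hstar hlow hhigh
  set r1 := R0 / (1 - μ) with hr1def
  obtain ⟨hx1p, hx1N⟩ := hx1
  obtain ⟨hx2p, hx2N⟩ := hx2
  obtain ⟨hSp, hSN⟩ := hstar
  have hNne : N ≠ 0 := ne_of_gt hN
  rw [Real.log_div hNne (ne_of_gt hx1p)] at hx1eq
  rw [Real.log_div hNne (ne_of_gt hx2p)] at hx2eq
  rw [Real.log_div hNne (ne_of_gt hSp)] at hlow hhigh
  constructor
  · -- x1 ≤ Sinfstar
    by_contra hc
    push_neg at hc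
    -- First: x1 * r1 < N
    have hx1r : x1 * r1 < N := by
      by_contra h2
      push_neg at h2
      have := logB_aux N r1 x1 N hN hx1p hx1N h2
      linarith
    have hA := logA_aux N r1 Sinfstar x1 hN hSp hc (le_of_lt hx1r)
    have hid : r1 * (N - x1) / N + r1 * (x1 - Sinfstar) / N = r1 * (N - Sinfstar) / N := by
      ring
    linarith
  · -- Sinfstar ≤ x2
    by_contra hc
    push_neg at hc
    by_cases hcase : Sinfstar * R0 ≤ N
    · have hA := logA_aux N R0 x2 Sinfstar hN hx2p hc hcase
      have hid : R0 * (N - x2) / N - R0 * (Sinfstar - x2) / N = R0 * (N - Sinfstar) / N := by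
        ring
      linarith
    · push_neg at hcase
      have hB := logB_aux N R0 Sinfstar N hN hSp hSN (le_of_lt hcase)
      linarith
end

section
/- In the SEIAR model with nonnegative solutions, the quantity $V = S + E_i + E_a + I + A$ satisfies $V' = -\alpha_i I - \alpha_a A \leq 0$; hence $V$ is nonincreasing, converges to a limit $V_\infty \geq 0$, and if $I$ and $A$ are uniformly continuous then $I(t) \to 0$ and $A(t) \to 0$ as $t \to \infty$, and $S(0) - S(\infty) + E_i(0) + E_a(0) + I(0) + A(0) - E_i(\infty) - E_a(\infty) = \alpha_i \int_0^\infty I + \alpha_a \int_0^\infty A$ whenever the integrals are finite. -/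
open MeasureTheory

theorem SEIAR_total_infected_decreasing_and_final_size_identity
    (a N f κi κa αi αa : ℝ)
    (ha : 0 < a) (hN : 0 < N) (hf : 0 < f) (hf1 : f < 1)
    (hκi : 0 < κi) (hκa : 0 < κa) (hαi : 0 < αi) (hαa : 0 < αa)
    (S Ei Ea I A : ℝ → ℝ)
    (hS : ∀ t, HasDerivAt S (-(a / N) * S t * (I t + A t)) t)
    (hEi : ∀ t, HasDerivAt Ei (a * f / N * S t * (I t + A t) - κi * Ei t) t)
    (hEa : ∀ t, HasDerivAt Ea (a * (1 - f) / N * S t * (I t + A t) - κa * Ea t) t)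
    (hI : ∀ t, HasDerivAt I (κi * Ei t - αi * I t) t)
    (hA : ∀ t, HasDerivAt A (κa * Ea t - αa * A t) t)
    (hnonneg : ∀ t, 0 ≤ t → 0 ≤ S t ∧ 0 ≤ Ei t ∧ 0 ≤ Ea t ∧ 0 ≤ I t ∧ 0 ≤ A t)
    (V : ℝ → ℝ) (hV : ∀ t, V t = S t + Ei t + Ea t + I t + A t) :
    (∀ t, HasDerivAt V (-(αi * I t) - αa * A t) t) ∧
    (∀ s t, 0 ≤ s → s ≤ t → V t ≤ V s) ∧
    (∃ Vinf : ℝ, 0 ≤ Vinf ∧ Filter.Tendsto V Filter.atTop (nhds Vinf)) ∧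
    (UniformContinuous I → UniformContinuous A →
      Filter.Tendsto I Filter.atTop (nhds 0) ∧
      Filter.Tendsto A Filter.atTop (nhds 0)) ∧
    (∀ Sinf Eiinf Eainf : ℝ,
      Filter.Tendsto S Filter.atTop (nhds Sinf) →
      Filter.Tendsto Ei Filter.atTop (nhds Eiinf) →
      Filter.Tendsto Ea Filter.atTop (nhds Eainf) →
      Filter.Tendsto I Filter.atTop (nhds 0) →
      Filter.Tendsto A Filter.atTop (nhds 0) →
      IntegrableOn I (Set.Ioi 0) → IntegrableOn A (Set.Ioi 0) →
      S 0 - Sinf + Ei 0 + Ea 0 + I 0 + A 0 - Eiinf - Eainf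
        = αi * (∫ t in Set.Ioi (0:ℝ), I t) + αa * (∫ t in Set.Ioi (0:ℝ), A t)) := by
  have hVfun : V = fun t => S t + Ei t + Ea t + I t + A t := funext hV
  -- Part 1: derivative of V
  have hV' : ∀ t, HasDerivAt V (-(αi * I t) - αa * A t) t := by
    intro t
    rw [hVfun]
    have h := ((((hS t).add (hEi t)).add (hEa t)).add (hI t)).add (hA t)
    refine h.congr_deriv ?_
    ring
  -- V is nonnegative on [0, ∞)
  have hVnn : ∀ t, 0 ≤ t → 0 ≤ V t := by
    intro t ht
    obtain ⟨h1, h2, h3, h4, h5⟩ := hnonneg t ht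
    rw [hV]; linarith
  -- Part 2: antitone on Ici 0
  have hanti : AntitoneOn V (Set.Ici 0) := by
    apply antitoneOn_of_deriv_nonpos (convex_Ici 0)
      (fun t _ => (hV' t).continuousAt.continuousWithinAt)
      (fun t _ => (hV' t).differentiableAt.differentiableWithinAt)
    intro t ht
    rw [interior_Ici] at ht
    rw [(hV' t).deriv]
    obtain ⟨h1, h2, h3, h4, h5⟩ := hnonneg t ht.le
    nlinarith
  have part2 : ∀ s t, 0 ≤ s → s ≤ t → V t ≤ V s := by
    intro s t hs hst
    exact hanti hs (le_trans hs hst) hst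
  -- Part 3: limit exists
  have hW : Antitone (fun t => V (max t 0)) := by
    intro s t hst
    exact hanti (le_max_right s 0) (le_max_right t 0) (max_le_max hst le_rfl)
  have hWbdd : BddBelow (Set.range fun t => V (max t 0)) := by
    refine ⟨0, ?_⟩
    rintro x ⟨t, rfl⟩
    exact hVnn _ (le_max_right t 0)
  have hWlim := tendsto_atTop_ciInf hW hWbdd
  have hVeq : (fun t => V (max t 0)) =ᶠ[Filter.atTop] V := by
    filter_upwards [Filter.eventually_ge_atTop (0:ℝ)] with t ht
    rw [max_eq_left ht]
  have hVlim : Filter.Tendsto V Filter.atTop (nhds (⨅ t, V (max t 0))) :=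
    hWlim.congr' hVeq
  have hVinf0 : 0 ≤ ⨅ t, V (max t 0) :=
    le_ciInf fun t => hVnn _ (le_max_right t 0)
  set Vinf := ⨅ t, V (max t 0) with hVinfdef
  -- Barbalat-type lemma
  have barbalat : ∀ (g : ℝ → ℝ) (c : ℝ), 0 < c →
      (∀ t, 0 ≤ t → 0 ≤ g t) → UniformContinuous g →
      (∀ t, 0 ≤ t → -(αi * I t) - αa * A t ≤ -(c * g t)) →
      Filter.Tendsto g Filter.atTop (nhds 0) := by
    intro g c hc hg hgU hdb
    by_contra hcon
    rw [Metric.tendsto_atTop] at hcon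
    push_neg at hcon
    obtain ⟨ε, hε, hfreq⟩ := hcon
    obtain ⟨δ, hδ, hδ'⟩ := Metric.uniformContinuous_iff.mp hgU (ε/2) (half_pos hε)
    set K := c * (ε/2) * (δ/2) with hK
    have hKpos : 0 < K := by positivity
    rw [Metric.tendsto_atTop] at hVlim
    obtain ⟨T₀, hT₀⟩ := hVlim (K/2) (half_pos hKpos)
    obtain ⟨t, htT, hgt⟩ := hfreq (max T₀ 0)
    have ht0 : 0 ≤ t := le_trans (le_max_right _ _) htT
    have hgtε : ε ≤ g t := by
      rwa [Real.dist_eq, sub_zero, abs_of_nonneg (hg t ht0)] at hgt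
    -- on [t, t+δ/2], g ≥ ε/2
    have hgs : ∀ s ∈ Set.Icc t (t + δ/2), ε/2 ≤ g s := by
      intro s hs
      have hd : dist s t < δ := by
        rw [Real.dist_eq, abs_of_nonneg (by linarith [hs.1])]
        linarith [hs.2, half_lt_self hδ]
      have := hδ' hd
      rw [Real.dist_eq, abs_lt] at this
      linarith
    -- the function V s + c*(ε/2)*s is antitone on [t, t+δ/2]
    have hmono : AntitoneOn (fun s => V s + c * (ε/2) * s) (Set.Icc t (t + δ/2)) := by
      have hds : ∀ s, HasDerivAt (fun s => V s + c * (ε/2) * s)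
          ((-(αi * I s) - αa * A s) + c * (ε/2) * 1) s :=
        fun s => (hV' s).add ((hasDerivAt_id s).const_mul (c * (ε/2)))
      apply antitoneOn_of_deriv_nonpos (convex_Icc _ _)
        (fun s _ => (hds s).continuousAt.continuousWithinAt)
        (fun s _ => (hds s).differentiableAt.differentiableWithinAt)
      intro s hs
      rw [interior_Icc] at hs
      rw [(hds s).deriv]
      have hs0 : 0 ≤ s := le_trans ht0 hs.1.le
      have h1 := hdb s hs0
      have h2 := hgs s ⟨hs.1.le, hs.2.le⟩
      nlinarith
    have hdrop : V (t + δ/2) + c * (ε/2) * (t + δ/2) ≤ V t + c * (ε/2) * t :=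
      hmono (Set.left_mem_Icc.mpr (by linarith)) ⟨by linarith, le_rfl⟩ (by linarith)
    have hKle : K ≤ V t - V (t + δ/2) := by rw [hK]; nlinarith
    have h1 := hT₀ t (le_trans (le_max_left _ _) htT)
    have h2 := hT₀ (t + δ/2) (by linarith [le_trans (le_max_left T₀ 0) htT])
    rw [Real.dist_eq, abs_lt] at h1 h2
    linarith [h1.1, h1.2, h2.1, h2.2]
  refine ⟨hV', part2, ⟨Vinf, hVinf0, hVlim⟩, ?_, ?_⟩
  · intro hIU hAU
    constructor
    · apply barbalat I αi hαi (fun t ht => (hnonneg t ht).2.2.2.1) hIU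
      intro t ht
      have := (hnonneg t ht).2.2.2.2
      nlinarith
    · apply barbalat A αa hαa (fun t ht => (hnonneg t ht).2.2.2.2) hAU
      intro t ht
      have := (hnonneg t ht).2.2.2.1
      nlinarith
  · intro Sinf Eiinf Eainf hSt hEit hEat hIt hAt hIint hAint
    have hVt : Filter.Tendsto V Filter.atTop (nhds (Sinf + Eiinf + Eainf + 0 + 0)) := by
      rw [hVfun]
      exact ((((hSt.add hEit).add hEat).add hIt).add hAt)
    have hint : IntegrableOn (fun t => -(αi * I t) - αa * A t) (Set.Ioi (0:ℝ)) :=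
      ((hIint.const_mul αi).neg).sub (hAint.const_mul αa)
    have key := integral_Ioi_of_hasDerivAt_of_tendsto' (f := V)
      (f' := fun t => -(αi * I t) - αa * A t) (a := 0)
      (fun x _ => hV' x) hint hVt
    have hsplit : ∫ t in Set.Ioi (0:ℝ), (-(αi * I t) - αa * A t)
        = -(αi * ∫ t in Set.Ioi (0:ℝ), I t) - αa * ∫ t in Set.Ioi (0:ℝ), A t := by
      have hi1 : Integrable (fun t => -(αi * I t)) (volume.restrict (Set.Ioi (0:ℝ))) :=
        (hIint.const_mul αi).neg
      have hi2 : Integrable (fun t => αa * A t) (volume.restrict (Set.Ioi (0:ℝ))) :=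
        hAint.const_mul αa
      rw [integral_sub hi1 hi2, integral_neg, integral_const_mul, integral_const_mul]
    rw [hsplit] at key
    have hV0 := hV 0
    linarith
end
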